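/- The group with presentation ⟨σ, ρ | σ⁻¹ρσ⁻¹ρ = ρσ⁻¹ρσ, ρ² = σ²⟩ has order 16. -/
import Mathlib


/-- Relations for `B₂(ℝP²) = ⟨σ, ρ | σ⁻¹ρσ⁻¹ρ = ρσ⁻¹ρσ, ρ² = σ²⟩`, with
`σ` = generator `0` and `ρ` = generator `1`. -/
def rp2Rels : Set (FreeGroup (Fin 2)) :=
  { (FreeGroup.of 0)⁻¹ * FreeGroup.of 1 * (FreeGroup.of 0)⁻¹ * FreeGroup.of 1 *
      (FreeGroup.of 1 * (FreeGroup.of 0)⁻¹ * FreeGroup.of 1 * FreeGroup.of 0)⁻¹,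
    (FreeGroup.of 1) ^ 2 * ((FreeGroup.of 0) ^ 2)⁻¹ }

namespace Rp2Aux

open QuaternionGroup

abbrev P := PresentedGroup rp2Rels

def sP : P := PresentedGroup.of 0
def rP : P := PresentedGroup.of 1
def uP : P := sP⁻¹ * rP

lemma mk_rel {x : FreeGroup (Fin 2)} (h : x ∈ rp2Rels) :
    PresentedGroup.mk rp2Rels x = 1 :=
  (QuotientGroup.eq_one_iff _).mpr (Subgroup.subset_normalClosure h)

lemma rel1 : sP⁻¹ * rP * sP⁻¹ * rP = rP * sP⁻¹ * rP * sP := by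
  have h := mk_rel (x := (FreeGroup.of 0)⁻¹ * FreeGroup.of 1 * (FreeGroup.of 0)⁻¹ *
      FreeGroup.of 1 * (FreeGroup.of 1 * (FreeGroup.of 0)⁻¹ * FreeGroup.of 1 * FreeGroup.of 0)⁻¹)
    (Or.inl rfl)
  simp only [map_mul, map_inv] at h
  rw [mul_inv_eq_one] at h
  exact h

lemma rel2 : rP * rP = sP * sP := by
  have h := mk_rel (x := (FreeGroup.of 1) ^ 2 * ((FreeGroup.of 0) ^ 2)⁻¹)
    (Or.inr rfl)
  simp only [map_mul, map_inv, map_pow] at h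
  rw [mul_inv_eq_one, pow_two, pow_two] at h
  exact h

lemma uA : uP * sP = sP * uP⁻¹ := by
  simp only [uP]
  calc (sP⁻¹ * rP) * sP
      = sP⁻¹ * (rP * rP) * (rP⁻¹ * sP) := by group
    _ = sP⁻¹ * (sP * sP) * (rP⁻¹ * sP) := by rw [rel2]
    _ = sP * (sP⁻¹ * rP)⁻¹ := by group

lemma usu : uP * sP * uP = sP := by rw [uA]; group

lemma uB : uP * uP * uP * uP = sP * sP := by
  calc uP * uP * uP * uP
      = (sP⁻¹ * rP * sP⁻¹ * rP) * (sP⁻¹ * rP * sP⁻¹ * rP) := by simp only [uP]; group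
    _ = (rP * sP⁻¹ * rP * sP) * (sP⁻¹ * rP * sP⁻¹ * rP) := by rw [rel1]
    _ = rP * sP⁻¹ * (rP * rP) * sP⁻¹ * rP := by group
    _ = rP * sP⁻¹ * (sP * sP) * sP⁻¹ * rP := by rw [rel2]
    _ = rP * rP := by group
    _ = sP * sP := rel2

lemma s4 : sP ^ 4 = 1 := by
  have h : uP * (uP * (uP * (uP * sP * uP) * uP) * uP) * uP = sP := by
    rw [usu, usu, usu, usu]
  have h2 : uP * uP * uP * uP * sP * (uP * uP * uP * uP)
      = uP * (uP * (uP * (uP * sP * uP) * uP) * uP) * uP := by group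
  rw [h, uB] at h2
  calc sP ^ 4 = sP * sP * sP * (sP * sP) * sP⁻¹ := by
        rw [pow_succ, pow_succ, pow_succ, pow_one]; group
    _ = sP * sP⁻¹ := by rw [h2]
    _ = 1 := mul_inv_cancel sP

lemma uBpow : uP ^ 4 = sP ^ 2 := by
  rw [pow_succ, pow_succ, pow_succ, pow_one, pow_two]
  exact uB

lemma u8 : uP ^ 8 = 1 := by
  rw [show (8 : ℕ) = 4 * 2 from rfl, pow_mul, uBpow, ← pow_mul]
  exact s4

lemma umod (a : ℕ) : uP ^ (a % 8) = uP ^ a := by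
  conv_rhs => rw [← Nat.div_add_mod a 8]
  rw [pow_add, pow_mul, u8, one_pow, one_mul]

lemma uval_add (i j : ZMod (2 * 4)) : uP ^ (i + j).val = uP ^ i.val * uP ^ j.val := by
  haveI : NeZero (2 * 4) := ⟨by norm_num⟩
  rw [← pow_add, ZMod.val_add, umod]

lemma upow_s (m : ℕ) : uP ^ m * sP = sP * (uP ^ m)⁻¹ := by
  induction m with
  | zero => simp
  | succ k ih =>
    rw [pow_succ, mul_assoc, uA, ← mul_assoc, ih]
    group

/-- the backward map -/
def gfun : QuaternionGroup 4 → P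
  | .a i => uP ^ i.val
  | .xa i => sP * uP ^ i.val

lemma g_mul : ∀ x y : QuaternionGroup 4, gfun (x * y) = gfun x * gfun y := by
  have h4 : sP * sP = uP ^ ((4 : ℕ) : ZMod (2 * 4)).val := by
    rw [show (((4 : ℕ) : ZMod (2 * 4))).val = 4 from rfl, pow_succ, pow_succ, pow_succ, pow_one]
    exact uB.symm
  rintro (i | i) (j | j)
  · show uP ^ (i + j).val = uP ^ i.val * uP ^ j.val
    exact uval_add i j
  · show sP * uP ^ (j - i).val = uP ^ i.val * (sP * uP ^ j.val)
    have hz : uP ^ i.val * uP ^ (j - i).val = uP ^ j.val := by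
      rw [← uval_add, show i + (j - i) = j from by ring]
    rw [← mul_assoc, upow_s, mul_assoc, ← hz]
    group
  · show sP * uP ^ (i + j).val = sP * uP ^ i.val * uP ^ j.val
    rw [uval_add, mul_assoc]
  · show uP ^ (((4 : ℕ) : ZMod (2 * 4)) + j - i).val = sP * uP ^ i.val * (sP * uP ^ j.val)
    have key : uP ^ (((4 : ℕ) : ZMod (2 * 4)) + j - i).val * uP ^ i.val
        = uP ^ ((4 : ℕ) : ZMod (2 * 4)).val * uP ^ j.val := by
      rw [← uval_add, ← uval_add, show ((4 : ℕ) : ZMod (2 * 4)) + j - i + i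
        = ((4 : ℕ) : ZMod (2 * 4)) + j from by ring]
    have lhs_eq : uP ^ (((4 : ℕ) : ZMod (2 * 4)) + j - i).val
        = uP ^ ((4 : ℕ) : ZMod (2 * 4)).val * uP ^ j.val * (uP ^ i.val)⁻¹ := by
      rw [← key]; group
    rw [lhs_eq, show sP * uP ^ i.val * (sP * uP ^ j.val)
      = sP * (uP ^ i.val * sP) * uP ^ j.val from by group, upow_s, ← h4]
    group

def g : QuaternionGroup 4 →* P := MonoidHom.mk' gfun g_mul

/-- generators image -/
def fmap : Fin 2 → QuaternionGroup 4 := ![QuaternionGroup.xa 0, QuaternionGroup.xa 1]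

lemma frels : ∀ w ∈ rp2Rels, FreeGroup.lift fmap w = 1 := by
  intro w hw
  rcases hw with h | h <;> subst h <;>
    simp only [map_mul, map_inv, map_pow, FreeGroup.lift_apply_of, fmap,
      Matrix.cons_val_zero, Matrix.cons_val_one, Matrix.head_cons] <;> decide

def f : P →* QuaternionGroup 4 := PresentedGroup.toGroup frels

lemma f_s : f sP = QuaternionGroup.xa 0 := by
  simp [f, sP, PresentedGroup.toGroup.of, fmap]

lemma f_r : f rP = QuaternionGroup.xa 1 := by
  simp [f, rP, PresentedGroup.toGroup.of, fmap]

lemma f_u : f uP = QuaternionGroup.a 1 := by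
  rw [uP, map_mul, map_inv, f_s, f_r]
  decide

lemma left_inv : ∀ x : P, g (f x) = x := by
  have : (g.comp f) = MonoidHom.id P := by
    apply PresentedGroup.ext
    intro x
    fin_cases x
    · show g (f sP) = sP
      rw [f_s]
      show sP * uP ^ (0 : ZMod (2 * 4)).val = sP
      rw [show ((0 : ZMod (2 * 4))).val = 0 from rfl, pow_zero, mul_one]
    · show g (f rP) = rP
      rw [f_r]
      show sP * uP ^ (1 : ZMod (2 * 4)).val = rP
      rw [show ((1 : ZMod (2 * 4))).val = 1 from rfl, pow_one, uP]
      group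
  intro x
  have := DFunLike.congr_fun this x
  simpa using this

lemma right_inv : ∀ q : QuaternionGroup 4, f (g q) = q := by
  rintro (i | i)
  · show f (uP ^ i.val) = QuaternionGroup.a i
    rw [map_pow, f_u, QuaternionGroup.a_one_pow]
    congr 1
    simp [ZMod.natCast_val, ZMod.cast_id]
  · show f (sP * uP ^ i.val) = QuaternionGroup.xa i
    rw [map_mul, map_pow, f_s, f_u, QuaternionGroup.a_one_pow, QuaternionGroup.xa_mul_a]
    congr 1
    simp [ZMod.natCast_val, ZMod.cast_id]

end Rp2Aux

/-- The group `⟨σ, ρ | σ⁻¹ρσ⁻¹ρ = ρσ⁻¹ρσ, ρ² = σ²⟩` has order 16. -/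
theorem rp2_braid_two_card : Nat.card (PresentedGroup rp2Rels) = 16 := by
  have e : PresentedGroup rp2Rels ≃ QuaternionGroup 4 :=
    ⟨Rp2Aux.f, Rp2Aux.g, Rp2Aux.left_inv, Rp2Aux.right_inv⟩
  rw [Nat.card_congr e, Nat.card_eq_fintype_card, QuaternionGroup.card]
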